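/- Let n ≥ 3 be an integer and let ψ ∈ 𝒜 satisfy ∫₁^∞ ψ(t)^{−(n−1)} dt < ∞. Define the change of variables s = s(r) by 1/((n−2)s(r)^{n−2}) = ∫_r^∞ ψ(t)^{−(n−1)} dt for r > 0, with inverse r = r(s), and define ρ(s) := ψ(r(s))^{2(n−1)}/s^{2(n−1)} for s > 0. Then: lim_{r→0⁺} s(r)/r = 1, lim_{r→0⁺} s'(r) = 1, ρ extends continuously to [0,∞) with ρ(0) = 1 (i.e. lim_{s→0⁺} ρ(s) = 1), and lim_{s→0⁺} s ρ'(s) = 0. -/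

import Mathlib

open Set Filter MeasureTheory intervalIntegral
open scoped Interval
open scoped Topology

/-- The class `𝒜` of model functions: `ψ ∈ C^∞((0,∞)) ∩ C¹([0,∞))` with `ψ(0) = 0`,
`ψ'(0) = 1` (one-sided derivative) and `ψ > 0` on `(0,∞)`. -/
def classA (ψ : ℝ → ℝ) : Prop :=
  ContDiffOn ℝ (⊤ : ℕ∞) ψ (Set.Ioi 0) ∧ ContDiffOn ℝ 1 ψ (Set.Ici 0) ∧
  ψ 0 = 0 ∧ derivWithin ψ (Set.Ici 0) 0 = 1 ∧ ∀ r > (0 : ℝ), 0 < ψ r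

/-- The change of variables `s = s(r)` determined by
`1/((n-2) s^{n-2}) = ∫_r^∞ ψ(t)^{-(n-1)} dt`. -/
noncomputable def Svar (n : ℕ) (ψ : ℝ → ℝ) (r : ℝ) : ℝ :=
  (((n : ℝ) - 2) * ∫ t in Set.Ioi r, 1 / ψ t ^ (n - 1)) ^ (-(1 / ((n : ℝ) - 2)))

namespace St10

variable (n : ℕ) (ψ : ℝ → ℝ)

noncomputable def f (t : ℝ) : ℝ := 1 / ψ t ^ (n - 1)

noncomputable def I (r : ℝ) : ℝ := ∫ t in Set.Ioi r, f n ψ t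

variable {n ψ}

lemma slope_lim (hψA : classA ψ) :
    Tendsto (fun r => ψ r / r) (𝓝[>] 0) (𝓝 1) := by
  obtain ⟨-, h1, h0, hd, -⟩ := hψA
  have hdiff : DifferentiableWithinAt ℝ ψ (Ici 0) 0 :=
    (h1.differentiableOn one_ne_zero) 0 Set.self_mem_Ici
  have := hdiff.hasDerivWithinAt
  rw [hd] at this
  have := hasDerivWithinAt_iff_tendsto_slope.1 this
  rw [Set.Ici_sdiff_left] at this
  refine this.congr (fun r => ?_)
  simp [slope_def_field, h0]

lemma deriv_lim (hψA : classA ψ) :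
    Tendsto (deriv ψ) (𝓝[>] 0) (𝓝 1) := by
  obtain ⟨-, h1, -, hd, -⟩ := hψA
  have hder : ContinuousOn (derivWithin ψ (Ici 0)) (Ici 0) := by
    exact h1.continuousOn_derivWithin (uniqueDiffOn_Ici 0) le_rfl
  have h2 : Tendsto (derivWithin ψ (Ici 0)) (𝓝[>] 0) (𝓝 1) := by
    have := (hder 0 Set.self_mem_Ici).tendsto
    rw [hd] at this
    exact this.mono_left (nhdsWithin_mono 0 Ioi_subset_Ici_self)
  refine h2.congr' ?_
  filter_upwards [self_mem_nhdsWithin] with r (hr : 0 < r)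
  rw [derivWithin_of_mem_nhds (Ici_mem_nhds hr)]

lemma f_contOn (hψA : classA ψ) : ContinuousOn (f n ψ) (Ioi 0) := by
  obtain ⟨h, -, -, -, hpos⟩ := hψA
  have hc : ContinuousOn ψ (Ioi 0) := h.continuousOn
  exact continuousOn_const.div (hc.pow _) (fun t ht => pow_ne_zero _ (hpos t ht).ne')

lemma f_pos (hψA : classA ψ) {t : ℝ} (ht : 0 < t) : 0 < f n ψ t :=
  div_pos one_pos (pow_pos (hψA.2.2.2.2 t ht) _)

lemma f_intble (hψA : classA ψ)
    (hint : MeasureTheory.IntegrableOn (fun t => 1 / ψ t ^ (n - 1)) (Set.Ioi 1))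
    {r : ℝ} (hr : 0 < r) : IntegrableOn (f n ψ) (Ioi r) := by
  have h1 : IntegrableOn (f n ψ) (Ioc r 1) := by
    rcases le_or_gt r 1 with h | h
    · have : ContinuousOn (f n ψ) (Icc r 1) :=
        (f_contOn hψA).mono (fun t ht => lt_of_lt_of_le hr ht.1)
      exact (this.integrableOn_compact isCompact_Icc).mono_set Ioc_subset_Icc_self
    · simp [Set.Ioc_eq_empty (not_lt.mpr h.le), IntegrableOn]
  have h2 : IntegrableOn (f n ψ) (Ioi 1) := hint
  have : IntegrableOn (f n ψ) (Ioc r 1 ∪ Ioi 1) := h1.union h2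
  refine this.mono_set (fun t ht => ?_)
  rcases le_or_gt t 1 with h | h
  · exact Or.inl ⟨ht, h⟩
  · exact Or.inr h

lemma f_ii (hψA : classA ψ) {a b : ℝ} (ha : 0 < a) (hab : a ≤ b) :
    IntervalIntegrable (f n ψ) volume a b := by
  have : ContinuousOn (f n ψ) (Icc a b) :=
    (f_contOn hψA).mono (fun t ht => lt_of_lt_of_le ha ht.1)
  exact this.intervalIntegrable_of_Icc hab

lemma I_split (hψA : classA ψ)
    (hint : MeasureTheory.IntegrableOn (fun t => 1 / ψ t ^ (n - 1)) (Set.Ioi 1))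
    {a b : ℝ} (ha : 0 < a) (hab : a ≤ b) :
    I n ψ a = (∫ t in a..b, f n ψ t) + I n ψ b := by
  have hb : 0 < b := lt_of_lt_of_le ha hab
  rw [intervalIntegral.integral_of_le hab]
  unfold I
  rw [← Set.Ioc_union_Ioi_eq_Ioi hab,
    MeasureTheory.setIntegral_union (Set.Ioc_disjoint_Ioi le_rfl) measurableSet_Ioi
      ((f_intble hψA hint ha).mono_set Set.Ioc_subset_Ioi_self) (f_intble hψA hint hb)]

lemma I_nonneg (hψA : classA ψ) {r : ℝ} (hr : 0 < r) : 0 ≤ I n ψ r := by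
  refine MeasureTheory.setIntegral_nonneg measurableSet_Ioi (fun t ht => ?_)
  exact (f_pos hψA (lt_trans hr ht)).le

lemma I_pos (hψA : classA ψ)
    (hint : MeasureTheory.IntegrableOn (fun t => 1 / ψ t ^ (n - 1)) (Set.Ioi 1))
    {r : ℝ} (hr : 0 < r) : 0 < I n ψ r := by
  have hsplit := I_split hψA hint hr (le_of_lt (lt_add_one r))
  have hpos : 0 < ∫ t in r..(r+1), f n ψ t := by
    refine intervalIntegral.intervalIntegral_pos_of_pos_on
      (f_ii hψA hr (le_of_lt (lt_add_one r))) (fun t ht => f_pos hψA (lt_trans hr ht.1))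
      (lt_add_one r)
  have hnn := I_nonneg (n := n) hψA (lt_trans hr (lt_add_one r))
  linarith [hsplit]

lemma I_hasDeriv (hψA : classA ψ)
    (hint : MeasureTheory.IntegrableOn (fun t => 1 / ψ t ^ (n - 1)) (Set.Ioi 1))
    {r : ℝ} (hr : 0 < r) : HasDerivAt (I n ψ) (-(f n ψ r)) r := by
  have hsm : StronglyMeasurableAtFilter (f n ψ) (𝓝 r) :=
    ⟨Ioi 0, Ioi_mem_nhds hr, ((f_contOn hψA).aestronglyMeasurable measurableSet_Ioi)⟩
  have hca : ContinuousAt (f n ψ) r :=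
    (f_contOn hψA).continuousAt (Ioi_mem_nhds hr)
  have h1 : HasDerivAt (fun x => ∫ t in r..x, f n ψ t) (f n ψ r) r :=
    intervalIntegral.integral_hasDerivAt_right (f_ii hψA hr le_rfl) hsm hca
  have h2 : HasDerivAt (fun x => I n ψ r - ∫ t in r..x, f n ψ t) (-(f n ψ r)) r := by
    exact h1.const_sub (I n ψ r)
  refine h2.congr_of_eventuallyEq ?_
  filter_upwards [Ioi_mem_nhds hr] with x (hx : 0 < x)
  rcases le_or_gt r x with h | h
  · have := I_split hψA hint hr h
    linarith
  · have := I_split hψA hint hx h.le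
    rw [intervalIntegral.integral_symm]
    linarith

lemma I_anti (hψA : classA ψ)
    (hint : MeasureTheory.IntegrableOn (fun t => 1 / ψ t ^ (n - 1)) (Set.Ioi 1)) :
    StrictAntiOn (I n ψ) (Ioi 0) := by
  intro a ha b hb hab
  have := I_split hψA hint (mem_Ioi.1 ha) hab.le
  have hpos : 0 < ∫ t in a..b, f n ψ t :=
    intervalIntegral.intervalIntegral_pos_of_pos_on (f_ii hψA ha hab.le)
      (fun t ht => f_pos hψA (lt_trans ha ht.1)) hab
  linarith


lemma pow_integral (hn : 3 ≤ n) {a b : ℝ} (ha : 0 < a) (hab : a ≤ b) :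
    ∫ t in a..b, 1 / t ^ (n - 1) = (1 / a ^ (n - 2) - 1 / b ^ (n - 2)) / ((n : ℝ) - 2) := by
  have hb : 0 < b := lt_of_lt_of_le ha hab
  have h0 : (0:ℝ) ∉ [[a, b]] := by
    rw [Set.uIcc_of_le hab]; intro h0; exact absurd (h0.1) (by linarith)
  have key : ∫ t in a..b, t ^ (-(n:ℤ) + 1) =
      (b ^ ((-(n:ℤ) + 1) + 1) - a ^ ((-(n:ℤ) + 1) + 1)) / (((-(n:ℤ) + 1) : ℤ) + 1) := by
    refine integral_zpow (Or.inr ⟨by omega, h0⟩)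
  have hcast : ∀ x : ℝ, 0 < x → x ^ (-(n:ℤ) + 1) = 1 / x ^ (n - 1) := by
    intro x hx
    rw [show (-(n:ℤ) + 1) = -((n - 1 : ℕ) : ℤ) by omega, zpow_neg, zpow_natCast, one_div]
  have hcast2 : ∀ x : ℝ, 0 < x → x ^ ((-(n:ℤ) + 1) + 1) = 1 / x ^ (n - 2) := by
    intro x hx
    rw [show ((-(n:ℤ) + 1) + 1) = -((n - 2 : ℕ) : ℤ) by omega, zpow_neg, zpow_natCast, one_div]
  have heq : (∫ t in a..b, 1 / t ^ (n - 1)) = ∫ t in a..b, t ^ (-(n:ℤ) + 1) := by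
    refine intervalIntegral.integral_congr (fun t ht => ?_)
    rw [Set.uIcc_of_le hab] at ht
    exact (hcast t (lt_of_lt_of_le ha ht.1)).symm
  rw [heq, key, hcast2 a ha, hcast2 b hb]
  have hcc : (((-(n:ℤ) + 1) : ℤ) : ℝ) + 1 = -((n:ℝ) - 2) := by push_cast; ring
  rw [hcc, div_neg, ← neg_div, neg_sub]

lemma key_lim (hn : 3 ≤ n) (hψA : classA ψ)
    (hint : MeasureTheory.IntegrableOn (fun t => 1 / ψ t ^ (n - 1)) (Set.Ioi 1)) :
    Tendsto (fun r => r ^ (n - 2) * I n ψ r) (𝓝[>] 0) (𝓝 (1 / ((n : ℝ) - 2))) := by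
  have hn3 : (3:ℝ) ≤ (n:ℝ) := by exact_mod_cast hn
  have hc : (0:ℝ) < (n:ℝ) - 2 := by linarith
  have hn2 : n - 2 ≠ 0 := by omega
  have hψpos := hψA.2.2.2.2
  rw [tendsto_order]
  constructor
  · -- lower bound
    intro b hb
    have hcont : ContinuousAt (fun x : ℝ => (((1+x) ^ (n-1))⁻¹) / ((n:ℝ)-2)) 0 := by
      have h1 : ContinuousAt (fun x : ℝ => ((1+x) ^ (n-1) : ℝ)) 0 := by fun_prop
      have h2 : ((1:ℝ)+0) ^ (n-1) ≠ 0 := by norm_num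
      exact (h1.inv₀ h2).div_const _
    have hval : (((1:ℝ)+0) ^ (n-1))⁻¹ / ((n:ℝ)-2) = 1 / ((n:ℝ)-2) := by norm_num
    have hev : ∀ᶠ x in 𝓝[>] (0:ℝ), b < (((1+x) ^ (n-1))⁻¹) / ((n:ℝ)-2) := by
      refine Filter.Tendsto.eventually_const_lt ?_ (hcont.tendsto.mono_left nhdsWithin_le_nhds)
      rw [hval]; exact hb
    obtain ⟨ε, hbε, hε⟩ := (hev.and self_mem_nhdsWithin).exists
    set q : ℝ := ((1+ε) ^ (n-1))⁻¹ with hq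
    have hqpos : 0 < q := by positivity
    have hsl : ∀ᶠ t in 𝓝[>] (0:ℝ), ψ t / t < 1 + ε :=
      (slope_lim hψA).eventually_lt_const (by linarith)
    obtain ⟨δ, hδ, hδsub⟩ := mem_nhdsGT_iff_exists_Ioo_subset.1 hsl
    rw [Set.mem_Ioi] at hδ
    set δ' : ℝ := δ / 2 with hδ'def
    have hδ'pos : 0 < δ' := by positivity
    have hδ'lt : δ' < δ := by simp [hδ'def]; linarith
    have hpt : ∀ t ∈ Set.Ioo (0:ℝ) δ, q * (1 / t ^ (n-1)) ≤ f n ψ t := by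
      intro t ht
      have ht0 : 0 < t := ht.1
      have hψt := hψpos t ht0
      have h1 : ψ t < (1+ε) * t := by
        have := hδsub ht
        rw [Set.mem_setOf_eq, div_lt_iff₀ ht0] at this
        exact this
      have h2 : ψ t ^ (n-1) ≤ ((1+ε) * t) ^ (n-1) := pow_le_pow_left₀ hψt.le h1.le _
      have h3 : (1:ℝ) / ((1+ε) * t) ^ (n-1) ≤ 1 / ψ t ^ (n-1) :=
        one_div_le_one_div_of_le (pow_pos hψt _) h2
      have h4 : (1:ℝ) / ((1+ε) * t) ^ (n-1) = q * (1 / t ^ (n-1)) := by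
        rw [mul_pow, hq, one_div, one_div, mul_inv]
      rw [← h4]; exact h3
    -- b < q/c
    have hbq : b < q / ((n:ℝ)-2) := hbε
    have htend : Tendsto (fun r : ℝ => q * (1 - r ^ (n-2) / δ' ^ (n-2)) / ((n:ℝ)-2))
        (𝓝[>] 0) (𝓝 (q / ((n:ℝ)-2))) := by
      have hco : Continuous (fun r : ℝ => q * (1 - r ^ (n-2) / δ' ^ (n-2)) / ((n:ℝ)-2)) := by
        fun_prop
      have := (hco.tendsto 0).mono_left (nhdsWithin_le_nhds (s := Set.Ioi (0:ℝ)))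
      simpa [zero_pow hn2] using this
    filter_upwards [htend.eventually_const_lt hbq,
      Ioo_mem_nhdsGT_of_mem (Set.left_mem_Ico.2 hδ'pos)] with r h1 h2
    have hr0 : 0 < r := h2.1
    have hrδ' : r < δ' := h2.2
    have hIb : q * ((1 / r ^ (n-2) - 1 / δ' ^ (n-2)) / ((n:ℝ)-2)) ≤ ∫ t in r..δ', f n ψ t := by
      have hgi : IntervalIntegrable (fun t => q * (1 / t ^ (n-1))) volume r δ' := by
        apply ContinuousOn.intervalIntegrable_of_Icc hrδ'.le
        refine continuousOn_const.mul (continuousOn_const.div (continuousOn_pow _) ?_)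
        intro t ht
        exact pow_ne_zero _ (lt_of_lt_of_le hr0 ht.1).ne'
      have hfi := f_ii (n := n) hψA hr0 hrδ'.le
      have hmono := intervalIntegral.integral_mono_on hrδ'.le hgi hfi
        (fun t ht => hpt t ⟨lt_of_lt_of_le hr0 ht.1, lt_of_le_of_lt ht.2 hδ'lt⟩)
      calc q * ((1 / r ^ (n-2) - 1 / δ' ^ (n-2)) / ((n:ℝ)-2))
          = ∫ t in r..δ', q * (1 / t ^ (n-1)) := by
            rw [intervalIntegral.integral_const_mul, pow_integral hn hr0 hrδ'.le]
        _ ≤ ∫ t in r..δ', f n ψ t := hmono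
    have hsplit := I_split hψA hint hr0 hrδ'.le
    have hInn := I_nonneg (n := n) hψA hδ'pos
    have h3 : q * ((1 / r ^ (n-2) - 1 / δ' ^ (n-2)) / ((n:ℝ)-2)) ≤ I n ψ r := by linarith
    have h4 := mul_le_mul_of_nonneg_left h3 (pow_nonneg hr0.le (n-2))
    have h5 : r ^ (n-2) * (q * ((1 / r ^ (n-2) - 1 / δ' ^ (n-2)) / ((n:ℝ)-2)))
        = q * (1 - r ^ (n-2) / δ' ^ (n-2)) / ((n:ℝ)-2) := by
      field_simp
    rw [h5] at h4
    linarith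
  · -- upper bound
    intro b hb
    have hcont : ContinuousAt (fun x : ℝ => (((1-x) ^ (n-1))⁻¹) / ((n:ℝ)-2)) 0 := by
      have h1 : ContinuousAt (fun x : ℝ => ((1-x) ^ (n-1) : ℝ)) 0 := by fun_prop
      have h2 : ((1:ℝ)-0) ^ (n-1) ≠ 0 := by norm_num
      exact (h1.inv₀ h2).div_const _
    have hev : ∀ᶠ x in 𝓝[>] (0:ℝ), (((1-x) ^ (n-1))⁻¹) / ((n:ℝ)-2) < b := by
      refine Filter.Tendsto.eventually_lt_const ?_ (hcont.tendsto.mono_left nhdsWithin_le_nhds)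
      simpa using hb
    have hev2 : ∀ᶠ x : ℝ in 𝓝[>] (0:ℝ), x < 1 :=
      eventually_nhdsWithin_of_eventually_nhds (eventually_lt_nhds one_pos)
    obtain ⟨ε, ⟨hbε, hε1⟩, hε⟩ := ((hev.and hev2).and self_mem_nhdsWithin).exists
    set q : ℝ := ((1-ε) ^ (n-1))⁻¹ with hq
    have h1ε : (0:ℝ) < 1 - ε := by linarith
    have hqpos : 0 < q := by positivity
    have hsl : ∀ᶠ t in 𝓝[>] (0:ℝ), 1 - ε < ψ t / t :=
      (slope_lim hψA).eventually_const_lt (by linarith)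
    obtain ⟨δ, hδ, hδsub⟩ := mem_nhdsGT_iff_exists_Ioo_subset.1 hsl
    rw [Set.mem_Ioi] at hδ
    set δ' : ℝ := δ / 2 with hδ'def
    have hδ'pos : 0 < δ' := by positivity
    have hδ'lt : δ' < δ := by simp [hδ'def]; linarith
    have hpt : ∀ t ∈ Set.Ioo (0:ℝ) δ, f n ψ t ≤ q * (1 / t ^ (n-1)) := by
      intro t ht
      have ht0 : 0 < t := ht.1
      have hψt := hψpos t ht0
      have h1 : (1-ε) * t < ψ t := by
        have := hδsub ht
        rw [Set.mem_setOf_eq, lt_div_iff₀ ht0] at this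
        exact this
      have h2 : ((1-ε) * t) ^ (n-1) ≤ ψ t ^ (n-1) :=
        pow_le_pow_left₀ (by positivity) h1.le _
      have h3 : (1:ℝ) / ψ t ^ (n-1) ≤ 1 / ((1-ε) * t) ^ (n-1) :=
        one_div_le_one_div_of_le (pow_pos (by positivity) _) h2
      have h4 : (1:ℝ) / ((1-ε) * t) ^ (n-1) = q * (1 / t ^ (n-1)) := by
        rw [mul_pow, hq, one_div, one_div, mul_inv]
      rw [← h4]; exact h3
    have hbq : q / ((n:ℝ)-2) < b := hbε
    have htend : Tendsto (fun r : ℝ => q / ((n:ℝ)-2) + r ^ (n-2) * I n ψ δ')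
        (𝓝[>] 0) (𝓝 (q / ((n:ℝ)-2))) := by
      have hco : Continuous (fun r : ℝ => q / ((n:ℝ)-2) + r ^ (n-2) * I n ψ δ') := by
        fun_prop
      have := (hco.tendsto 0).mono_left (nhdsWithin_le_nhds (s := Set.Ioi (0:ℝ)))
      simpa [zero_pow hn2] using this
    filter_upwards [htend.eventually_lt_const hbq,
      Ioo_mem_nhdsGT_of_mem (Set.left_mem_Ico.2 hδ'pos)] with r h1 h2
    have hr0 : 0 < r := h2.1
    have hrδ' : r < δ' := h2.2
    have hIb : (∫ t in r..δ', f n ψ t) ≤ q * ((1 / r ^ (n-2) - 1 / δ' ^ (n-2)) / ((n:ℝ)-2)) := by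
      have hgi : IntervalIntegrable (fun t => q * (1 / t ^ (n-1))) volume r δ' := by
        apply ContinuousOn.intervalIntegrable_of_Icc hrδ'.le
        refine continuousOn_const.mul (continuousOn_const.div (continuousOn_pow _) ?_)
        intro t ht
        exact pow_ne_zero _ (lt_of_lt_of_le hr0 ht.1).ne'
      have hfi := f_ii (n := n) hψA hr0 hrδ'.le
      have hmono := intervalIntegral.integral_mono_on hrδ'.le hfi hgi
        (fun t ht => hpt t ⟨lt_of_lt_of_le hr0 ht.1, lt_of_le_of_lt ht.2 hδ'lt⟩)
      calc (∫ t in r..δ', f n ψ t) ≤ ∫ t in r..δ', q * (1 / t ^ (n-1)) := hmono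
        _ = q * ((1 / r ^ (n-2) - 1 / δ' ^ (n-2)) / ((n:ℝ)-2)) := by
            rw [intervalIntegral.integral_const_mul, pow_integral hn hr0 hrδ'.le]
    have hsplit := I_split hψA hint hr0 hrδ'.le
    have h3 : I n ψ r ≤ q * ((1 / r ^ (n-2) - 1 / δ' ^ (n-2)) / ((n:ℝ)-2)) + I n ψ δ' := by
      linarith
    have h4 := mul_le_mul_of_nonneg_left h3 (pow_nonneg hr0.le (n-2))
    have h5 : r ^ (n-2) * (q * ((1 / r ^ (n-2) - 1 / δ' ^ (n-2)) / ((n:ℝ)-2)) + I n ψ δ')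
        ≤ q / ((n:ℝ)-2) + r ^ (n-2) * I n ψ δ' := by
      have hkey : r ^ (n-2) * (q * ((1 / r ^ (n-2) - 1 / δ' ^ (n-2)) / ((n:ℝ)-2)))
          = q * (1 - r ^ (n-2) / δ' ^ (n-2)) / ((n:ℝ)-2) := by
        field_simp
      have hnn : 0 ≤ q * (r ^ (n-2) / δ' ^ (n-2)) / ((n:ℝ)-2) := by positivity
      calc r ^ (n-2) * (q * ((1 / r ^ (n-2) - 1 / δ' ^ (n-2)) / ((n:ℝ)-2)) + I n ψ δ')
          = r ^ (n-2) * (q * ((1 / r ^ (n-2) - 1 / δ' ^ (n-2)) / ((n:ℝ)-2)))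
            + r ^ (n-2) * I n ψ δ' := by ring
        _ ≤ q / ((n:ℝ)-2) + r ^ (n-2) * I n ψ δ' := by
            rw [hkey]
            have : q * (1 - r ^ (n-2) / δ' ^ (n-2)) / ((n:ℝ)-2)
                = q / ((n:ℝ)-2) - q * (r ^ (n-2) / δ' ^ (n-2)) / ((n:ℝ)-2) := by ring
            rw [this]
            linarith
    linarith


lemma Svar_eq (r : ℝ) : Svar n ψ r = (((n:ℝ) - 2) * I n ψ r) ^ (-(1 / ((n:ℝ) - 2))) := rfl

lemma Svar_pos (hn : 3 ≤ n) (hψA : classA ψ)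
    (hint : MeasureTheory.IntegrableOn (fun t => 1 / ψ t ^ (n - 1)) (Set.Ioi 1))
    {r : ℝ} (hr : 0 < r) : 0 < Svar n ψ r := by
  have hc : (0:ℝ) < (n:ℝ) - 2 := by
    have : (3:ℝ) ≤ (n:ℝ) := by exact_mod_cast hn
    linarith
  exact Real.rpow_pos_of_pos (mul_pos hc (I_pos hψA hint hr)) _

lemma cast_sub2 (hn : 3 ≤ n) : ((n - 2 : ℕ) : ℝ) = (n:ℝ) - 2 := by
  have : 2 ≤ n := by omega
  push_cast [Nat.cast_sub this]
  ring

lemma Svar_div_eq (hn : 3 ≤ n) (hψA : classA ψ)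
    (hint : MeasureTheory.IntegrableOn (fun t => 1 / ψ t ^ (n - 1)) (Set.Ioi 1))
    {r : ℝ} (hr : 0 < r) :
    Svar n ψ r / r = (((n:ℝ) - 2) * (r ^ (n-2) * I n ψ r)) ^ (-(1 / ((n:ℝ) - 2))) := by
  have hc : (0:ℝ) < (n:ℝ) - 2 := by
    have : (3:ℝ) ≤ (n:ℝ) := by exact_mod_cast hn
    linarith
  have hI := I_pos hψA hint hr
  have h1 : (((n:ℝ) - 2) * (r ^ (n-2) * I n ψ r))
      = (((n:ℝ) - 2) * I n ψ r) * r ^ (n-2) := by ring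
  rw [h1, Real.mul_rpow (by positivity) (by positivity), ← Svar_eq]
  rw [← Real.rpow_natCast r (n-2), ← Real.rpow_mul hr.le, cast_sub2 hn]
  rw [show ((n:ℝ) - 2) * -(1 / ((n:ℝ) - 2)) = -1 by field_simp]
  rw [Real.rpow_neg_one, div_eq_mul_inv]

lemma Svar_div_lim (hn : 3 ≤ n) (hψA : classA ψ)
    (hint : MeasureTheory.IntegrableOn (fun t => 1 / ψ t ^ (n - 1)) (Set.Ioi 1)) :
    Tendsto (fun r => Svar n ψ r / r) (𝓝[>] 0) (𝓝 1) := by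
  have hc : (0:ℝ) < (n:ℝ) - 2 := by
    have : (3:ℝ) ≤ (n:ℝ) := by exact_mod_cast hn
    linarith
  have hinner : Tendsto (fun r => ((n:ℝ) - 2) * (r ^ (n-2) * I n ψ r)) (𝓝[>] 0) (𝓝 1) := by
    have h := (key_lim hn hψA hint).const_mul ((n:ℝ) - 2)
    rw [show ((n:ℝ)-2) * (1/((n:ℝ)-2)) = 1 by field_simp] at h
    exact h
  have houter : ContinuousAt (fun x : ℝ => x ^ (-(1 / ((n:ℝ) - 2)))) 1 :=
    Real.continuousAt_rpow_const 1 _ (Or.inl one_ne_zero)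
  have := houter.tendsto.comp hinner
  rw [Real.one_rpow] at this
  refine this.congr' ?_
  filter_upwards [self_mem_nhdsWithin] with r (hr : 0 < r)
  exact (Svar_div_eq hn hψA hint hr).symm

lemma Svar_hasDeriv (hn : 3 ≤ n) (hψA : classA ψ)
    (hint : MeasureTheory.IntegrableOn (fun t => 1 / ψ t ^ (n - 1)) (Set.Ioi 1))
    {r : ℝ} (hr : 0 < r) :
    HasDerivAt (Svar n ψ) ((Svar n ψ r / ψ r) ^ (n-1)) r := by
  have hc : (0:ℝ) < (n:ℝ) - 2 := by
    have : (3:ℝ) ≤ (n:ℝ) := by exact_mod_cast hn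
    linarith
  have hI := I_pos hψA hint hr
  have hA : (0:ℝ) < ((n:ℝ) - 2) * I n ψ r := mul_pos hc hI
  set A := ((n:ℝ) - 2) * I n ψ r with hAdef
  have hinner : HasDerivAt (fun x => ((n:ℝ) - 2) * I n ψ x)
      (((n:ℝ) - 2) * -(f n ψ r)) r := (I_hasDeriv hψA hint hr).const_mul _
  have houter : HasDerivAt (fun x : ℝ => x ^ (-(1 / ((n:ℝ) - 2))))
      ((-(1 / ((n:ℝ) - 2))) * A ^ ((-(1 / ((n:ℝ) - 2))) - 1)) A :=
    Real.hasDerivAt_rpow_const (Or.inl hA.ne')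
  have hcomp := houter.comp r hinner
  have heq : (-(1 / ((n:ℝ) - 2))) * A ^ ((-(1 / ((n:ℝ) - 2))) - 1) * (((n:ℝ) - 2) * -(f n ψ r))
      = (Svar n ψ r / ψ r) ^ (n-1) := by
    have hψr := hψA.2.2.2.2 r hr
    have hS : Svar n ψ r = A ^ (-(1 / ((n:ℝ) - 2))) := rfl
    have hpow : (Svar n ψ r) ^ (n-1) = A ^ ((-(1 / ((n:ℝ) - 2))) * ((n-1:ℕ):ℝ)) := by
      rw [hS, Real.rpow_mul hA.le, Real.rpow_natCast]
    have hexp : (-(1 / ((n:ℝ) - 2))) * ((n-1:ℕ):ℝ) = (-(1 / ((n:ℝ) - 2))) - 1 := by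
      have h1 : ((n - 1 : ℕ) : ℝ) = (n:ℝ) - 1 := by
        have : 1 ≤ n := by omega
        push_cast [Nat.cast_sub this]
        ring
      rw [h1]
      field_simp
      ring
    rw [div_pow, hpow, hexp]
    unfold f
    field_simp
  rw [heq] at hcomp
  exact hcomp


lemma ratio_lim (hn : 3 ≤ n) (hψA : classA ψ)
    (hint : MeasureTheory.IntegrableOn (fun t => 1 / ψ t ^ (n - 1)) (Set.Ioi 1)) :
    Tendsto (fun r => Svar n ψ r / ψ r) (𝓝[>] 0) (𝓝 1) := by
  have h := (Svar_div_lim hn hψA hint).div (slope_lim hψA) one_ne_zero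
  rw [div_one] at h
  refine h.congr' ?_
  filter_upwards [self_mem_nhdsWithin] with r (hr : 0 < r)
  have hψr := hψA.2.2.2.2 r hr
  rw [Pi.div_apply]
  field_simp

lemma psi_div_Svar_lim (hn : 3 ≤ n) (hψA : classA ψ)
    (hint : MeasureTheory.IntegrableOn (fun t => 1 / ψ t ^ (n - 1)) (Set.Ioi 1)) :
    Tendsto (fun r => ψ r / Svar n ψ r) (𝓝[>] 0) (𝓝 1) := by
  have h := (slope_lim hψA).div (Svar_div_lim hn hψA hint) one_ne_zero
  rw [div_one] at h
  refine h.congr' ?_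
  filter_upwards [self_mem_nhdsWithin] with r (hr : 0 < r)
  have hS := St10.Svar_pos hn hψA hint hr
  rw [Pi.div_apply]
  field_simp

lemma deriv_Svar_lim (hn : 3 ≤ n) (hψA : classA ψ)
    (hint : MeasureTheory.IntegrableOn (fun t => 1 / ψ t ^ (n - 1)) (Set.Ioi 1)) :
    Tendsto (fun r => deriv (Svar n ψ) r) (𝓝[>] 0) (𝓝 1) := by
  have h := (ratio_lim hn hψA hint).pow (n-1)
  rw [one_pow] at h
  refine h.congr' ?_
  filter_upwards [self_mem_nhdsWithin] with r (hr : 0 < r)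
  exact ((Svar_hasDeriv hn hψA hint hr).deriv).symm

lemma Svar_mono (hn : 3 ≤ n) (hψA : classA ψ)
    (hint : MeasureTheory.IntegrableOn (fun t => 1 / ψ t ^ (n - 1)) (Set.Ioi 1)) :
    StrictMonoOn (Svar n ψ) (Set.Ioi 0) := by
  have hc : (0:ℝ) < (n:ℝ) - 2 := by
    have : (3:ℝ) ≤ (n:ℝ) := by exact_mod_cast hn
    linarith
  intro a ha b hb hab
  rw [Set.mem_Ioi] at ha hb
  have hIba : I n ψ b < I n ψ a := I_anti hψA hint ha hb hab
  have h1 : ((n:ℝ)-2) * I n ψ b < ((n:ℝ)-2) * I n ψ a := by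
    exact (mul_lt_mul_iff_right₀ hc).2 hIba
  have h2 : (0:ℝ) < ((n:ℝ)-2) * I n ψ b := mul_pos hc (I_pos hψA hint hb)
  exact Real.rpow_lt_rpow_of_neg h2 h1 (neg_lt_zero.2 (by positivity))

lemma Svar_tendsto_zero (hn : 3 ≤ n) (hψA : classA ψ)
    (hint : MeasureTheory.IntegrableOn (fun t => 1 / ψ t ^ (n - 1)) (Set.Ioi 1)) :
    Tendsto (Svar n ψ) (𝓝[>] 0) (𝓝 0) := by
  have hid : Tendsto (fun r : ℝ => r) (𝓝[>] 0) (𝓝 0) :=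
    tendsto_id.mono_left nhdsWithin_le_nhds
  have h := (Svar_div_lim hn hψA hint).mul hid
  rw [one_mul] at h
  refine (h.congr' ?_)
  filter_upwards [self_mem_nhdsWithin] with r (hr : 0 < r)
  field_simp

lemma I_atTop (hψA : classA ψ)
    (hint : MeasureTheory.IntegrableOn (fun t => 1 / ψ t ^ (n - 1)) (Set.Ioi 1)) :
    Tendsto (I n ψ) atTop (𝓝 0) := by
  have hint' : IntegrableOn (f n ψ) (Set.Ioi 1) := hint
  have h : Tendsto (fun r : ℝ => ∫ t in (1:ℝ)..r, f n ψ t) atTop (𝓝 (I n ψ 1)) :=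
    MeasureTheory.intervalIntegral_tendsto_integral_Ioi 1 hint' tendsto_id
  have h2 := (tendsto_const_nhds (x := I n ψ 1) (f := atTop)).sub h
  rw [sub_self] at h2
  refine h2.congr' ?_
  filter_upwards [eventually_ge_atTop (1:ℝ)] with r (hr : 1 ≤ r)
  have := I_split hψA hint one_pos hr
  linarith

lemma Svar_atTop (hn : 3 ≤ n) (hψA : classA ψ)
    (hint : MeasureTheory.IntegrableOn (fun t => 1 / ψ t ^ (n - 1)) (Set.Ioi 1)) :
    Tendsto (Svar n ψ) atTop atTop := by
  have hc : (0:ℝ) < (n:ℝ) - 2 := by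
    have : (3:ℝ) ≤ (n:ℝ) := by exact_mod_cast hn
    linarith
  have hCI : Tendsto (fun r => ((n:ℝ)-2) * I n ψ r) atTop (𝓝[>] 0) := by
    rw [tendsto_nhdsWithin_iff]
    constructor
    · have := (I_atTop hψA hint).const_mul ((n:ℝ)-2)
      simpa using this
    · filter_upwards [eventually_gt_atTop (0:ℝ)] with r hr
      exact mul_pos hc (I_pos hψA hint hr)
  have houter : Tendsto (fun x : ℝ => x ^ (-(1 / ((n:ℝ) - 2)))) (𝓝[>] 0) atTop := by
    have h1 : Tendsto (fun x : ℝ => x ^ (1 / ((n:ℝ) - 2))) (𝓝[>] 0) (𝓝[>] 0) := by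
      rw [tendsto_nhdsWithin_iff]
      constructor
      · have := (Real.continuousAt_rpow_const 0 (1 / ((n:ℝ) - 2))
          (Or.inr (by positivity))).tendsto
        rw [Real.zero_rpow (by positivity : (1 / ((n:ℝ) - 2)) ≠ 0)] at this
        exact this.mono_left nhdsWithin_le_nhds
      · filter_upwards [self_mem_nhdsWithin] with x (hx : 0 < x)
        exact Real.rpow_pos_of_pos hx _
    have h2 := h1.inv_tendsto_nhdsGT_zero
    refine h2.congr' ?_
    filter_upwards [self_mem_nhdsWithin] with x (hx : 0 < x)
    simp only [Pi.inv_apply]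
    exact (Real.rpow_neg hx.le _).symm
  exact houter.comp hCI


lemma Svar_surj (hn : 3 ≤ n) (hψA : classA ψ)
    (hint : MeasureTheory.IntegrableOn (fun t => 1 / ψ t ^ (n - 1)) (Set.Ioi 1))
    {s : ℝ} (hs : 0 < s) : ∃ r, 0 < r ∧ Svar n ψ r = s := by
  have hev : ∀ᶠ r in 𝓝[>] (0:ℝ), Svar n ψ r < s :=
    (Svar_tendsto_zero hn hψA hint).eventually_lt_const hs
  obtain ⟨a, hSa, ha⟩ := (hev.and self_mem_nhdsWithin).exists
  have ha : 0 < a := ha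
  obtain ⟨b, hSb, hab⟩ :=
    (((Svar_atTop hn hψA hint).eventually_gt_atTop s).and (eventually_gt_atTop a)).exists
  have hcont : ContinuousOn (Svar n ψ) (Set.Icc a b) := fun x hx =>
    ((Svar_hasDeriv hn hψA hint
      (lt_of_lt_of_le ha hx.1)).differentiableAt.continuousAt).continuousWithinAt
  obtain ⟨x, hx, hxe⟩ := intermediate_value_Icc hab.le hcont ⟨hSa.le, hSb.le⟩
  exact ⟨x, lt_of_lt_of_le ha hx.1, hxe⟩

end St10

/-- behaviour of the change of variables near the origin. Let
`n ≥ 3` and `ψ ∈ 𝒜` with `∫₁^∞ ψ^{-(n-1)} < ∞`. Then `s(r)/r → 1` and `s'(r) → 1` as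
`r → 0⁺`, and the weight `ρ(s) = ψ(r(s))^{2(n-1)}/s^{2(n-1)}` satisfies `ρ(s) → 1` and
`s ρ'(s) → 0` as `s → 0⁺`. -/
theorem stmt_10
    (n : ℕ) (hn : 3 ≤ n) (ψ : ℝ → ℝ) (hψA : classA ψ)
    (hint : MeasureTheory.IntegrableOn (fun t => 1 / ψ t ^ (n - 1)) (Set.Ioi 1)) :
    Filter.Tendsto (fun r => Svar n ψ r / r) (nhdsWithin 0 (Set.Ioi 0)) (nhds 1) ∧
    Filter.Tendsto (fun r => deriv (Svar n ψ) r) (nhdsWithin 0 (Set.Ioi 0)) (nhds 1) ∧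
    ∃ rOf : ℝ → ℝ,
      (∀ r > (0 : ℝ), rOf (Svar n ψ r) = r) ∧
      (∀ s > (0 : ℝ), Svar n ψ (rOf s) = s) ∧
      Filter.Tendsto (fun s => ψ (rOf s) ^ (2 * (n - 1)) / s ^ (2 * (n - 1)))
        (nhdsWithin 0 (Set.Ioi 0)) (nhds 1) ∧
      Filter.Tendsto (fun s =>
          s * deriv (fun σ => ψ (rOf σ) ^ (2 * (n - 1)) / σ ^ (2 * (n - 1))) s)
        (nhdsWithin 0 (Set.Ioi 0)) (nhds 0) := by
  refine ⟨St10.Svar_div_lim hn hψA hint, St10.deriv_Svar_lim hn hψA hint, ?_⟩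
  set rOf := Function.invFunOn (Svar n ψ) (Set.Ioi 0) with hrOfdef
  have hmono := St10.Svar_mono hn hψA hint
  have hinj : Set.InjOn (Svar n ψ) (Set.Ioi 0) := hmono.injOn
  have hleft : ∀ r > (0:ℝ), rOf (Svar n ψ r) = r := fun r hr =>
    hinj.leftInvOn_invFunOn hr
  have hx : ∀ s > (0:ℝ), rOf s ∈ Set.Ioi 0 ∧ Svar n ψ (rOf s) = s := by
    intro s hs
    obtain ⟨r, hr, hre⟩ := St10.Svar_surj hn hψA hint hs
    have hex : ∃ x ∈ Set.Ioi (0:ℝ), Svar n ψ x = s := ⟨r, hr, hre⟩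
    exact ⟨Function.invFunOn_mem hex, Function.invFunOn_eq hex⟩
  have hrOf_pos : ∀ s > (0:ℝ), 0 < rOf s := fun s hs => (hx s hs).1
  have hrOf_eq : ∀ s > (0:ℝ), Svar n ψ (rOf s) = s := fun s hs => (hx s hs).2
  -- rOf tends to 0 within Ioi 0
  have hrTend : Tendsto rOf (𝓝[>] 0) (𝓝[>] 0) := by
    rw [tendsto_nhdsWithin_iff]
    constructor
    · rw [tendsto_order]
      constructor
      · intro b hb
        filter_upwards [self_mem_nhdsWithin] with s (hs : 0 < s)
        exact lt_trans hb (hrOf_pos s hs)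
      · intro b hb
        have hSb : 0 < Svar n ψ b := St10.Svar_pos hn hψA hint hb
        filter_upwards [Ioo_mem_nhdsGT_of_mem (Set.left_mem_Ico.2 hSb)] with s hs
        by_contra hcon
        push_neg at hcon
        have := hmono.monotoneOn (Set.mem_Ioi.2 hb) (hx s hs.1).1 hcon
        rw [hrOf_eq s hs.1] at this
        exact absurd hs.2 (not_lt.2 this)
    · filter_upwards [self_mem_nhdsWithin] with s (hs : 0 < s)
      exact hrOf_pos s hs
  -- continuity of rOf on the positive axis
  have hrCont : ∀ s : ℝ, 0 < s → ContinuousAt rOf s := by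
    intro s hs
    have hrs := hrOf_pos s hs
    rw [ContinuousAt, tendsto_order]
    constructor
    · intro b hb
      rcases le_or_gt b 0 with hb0 | hb0
      · filter_upwards [Ioi_mem_nhds hs] with s' (hs' : 0 < s')
        exact lt_of_le_of_lt hb0 (hrOf_pos s' hs')
      · have h1 : Svar n ψ b < s := by
          have := hmono (Set.mem_Ioi.2 hb0) (Set.mem_Ioi.2 hrs) hb
          rwa [hrOf_eq s hs] at this
        have hSb : 0 < Svar n ψ b := St10.Svar_pos hn hψA hint hb0
        filter_upwards [Ioi_mem_nhds h1] with s' hs'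
        have hs'0 : 0 < s' := lt_trans hSb hs'
        by_contra hcon
        push_neg at hcon
        have := hmono.monotoneOn (hx s' hs'0).1 (Set.mem_Ioi.2 hb0) hcon
        rw [hrOf_eq s' hs'0] at this
        exact absurd hs' (not_lt.2 this)
    · intro b hb
      have hb0 : 0 < b := lt_trans hrs hb
      have h1 : s < Svar n ψ b := by
        have := hmono (Set.mem_Ioi.2 hrs) (Set.mem_Ioi.2 hb0) hb
        rwa [hrOf_eq s hs] at this
      filter_upwards [Ioo_mem_nhds hs h1] with s' hs'
      by_contra hcon
      push_neg at hcon
      have := hmono.monotoneOn (Set.mem_Ioi.2 hb0) (hx s' hs'.1).1 hcon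
      rw [hrOf_eq s' hs'.1] at this
      exact absurd hs'.2 (not_lt.2 this)
  -- derivative of rOf
  have hrDeriv : ∀ s : ℝ, 0 < s → HasDerivAt rOf ((ψ (rOf s) / s) ^ (n-1)) s := by
    intro s hs
    have hrs := hrOf_pos s hs
    have hψr := hψA.2.2.2.2 _ hrs
    have hf : HasDerivAt (Svar n ψ) ((Svar n ψ (rOf s) / ψ (rOf s)) ^ (n-1)) (rOf s) :=
      St10.Svar_hasDeriv hn hψA hint hrs
    rw [hrOf_eq s hs] at hf
    have hne : ((s / ψ (rOf s)) ^ (n-1)) ≠ 0 := pow_ne_zero _ (div_pos hs hψr).ne'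
    have hfg : ∀ᶠ y in 𝓝 s, Svar n ψ (rOf y) = y := by
      filter_upwards [Ioi_mem_nhds hs] with y (hy : 0 < y)
      exact hrOf_eq y hy
    have h := HasDerivAt.of_local_left_inverse (hrCont s hs) hf hne hfg
    rw [← inv_pow, inv_div] at h
    exact h
  -- the ratio tends to 1
  have hH : Tendsto (fun s => ψ (rOf s) / s) (𝓝[>] 0) (𝓝 1) := by
    have h := (St10.psi_div_Svar_lim hn hψA hint).comp hrTend
    refine h.congr' ?_
    filter_upwards [self_mem_nhdsWithin] with s (hs : 0 < s)
    simp only [Function.comp_apply]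
    rw [hrOf_eq s hs]
  have hRho : Tendsto (fun s => ψ (rOf s) ^ (2*(n-1)) / s ^ (2*(n-1))) (𝓝[>] 0) (𝓝 1) := by
    have h := hH.pow (2*(n-1))
    rw [one_pow] at h
    exact h.congr (fun s => by rw [div_pow])
  refine ⟨rOf, hleft, hrOf_eq, hRho, ?_⟩
  -- the weighted derivative limit
  have hW : Tendsto (fun s => deriv ψ (rOf s)) (𝓝[>] 0) (𝓝 1) :=
    (St10.deriv_lim hψA).comp hrTend
  obtain ⟨k, hk⟩ : ∃ k, 2*(n-1) = k+1 := ⟨2*(n-1)-1, by omega⟩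
  have hcomb : Tendsto (fun s =>
      ((k:ℝ)+1) * (ψ (rOf s) / s) ^ k * (deriv ψ (rOf s) * (ψ (rOf s) / s) ^ (n-1))
        - ((k:ℝ)+1) * (ψ (rOf s) / s) ^ (k+1)) (𝓝[>] 0) (𝓝 0) := by
    have h1 := (((hH.pow k).const_mul ((k:ℝ)+1)).mul (hW.mul (hH.pow (n-1))))
    have h2 := (hH.pow (k+1)).const_mul ((k:ℝ)+1)
    have h := h1.sub h2
    simpa using h
  refine hcomb.congr' ?_
  filter_upwards [self_mem_nhdsWithin] with s (hs : 0 < s)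
  have hrs := hrOf_pos s hs
  have hψr := hψA.2.2.2.2 _ hrs
  have hd := hrDeriv s hs
  have hψdiff : HasDerivAt ψ (deriv ψ (rOf s)) (rOf s) := by
    have hdOn : DifferentiableOn ℝ ψ (Set.Ioi 0) := hψA.1.differentiableOn (by simp)
    exact (hdOn.differentiableAt (Ioi_mem_nhds hrs)).hasDerivAt
  have hA : HasDerivAt (fun σ => ψ (rOf σ)) (deriv ψ (rOf s) * (ψ (rOf s) / s) ^ (n-1)) s :=
    hψdiff.comp s hd
  have hAP : HasDerivAt (fun σ => ψ (rOf σ) ^ (2*(n-1)))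
      (((2*(n-1) : ℕ):ℝ) * ψ (rOf s) ^ (2*(n-1)-1)
        * (deriv ψ (rOf s) * (ψ (rOf s) / s) ^ (n-1))) s := hA.pow (2*(n-1))
  have hB : HasDerivAt (fun σ : ℝ => σ ^ (2*(n-1))) (((2*(n-1) : ℕ):ℝ) * s ^ (2*(n-1)-1)) s := by
    simpa using hasDerivAt_pow (2*(n-1)) s
  have hBne : s ^ (2*(n-1)) ≠ 0 := pow_ne_zero _ hs.ne'
  have hQ := (hAP.div hB hBne).deriv
  rw [show (fun σ => ψ (rOf σ) ^ (2 * (n - 1)) / σ ^ (2 * (n - 1))) =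
    (fun σ => ψ (rOf σ) ^ (2 * (n - 1))) / (fun σ : ℝ => σ ^ (2 * (n - 1))) from rfl, hQ]
  simp only [hk, Nat.add_sub_cancel, Nat.cast_add, Nat.cast_one]
  generalize (ψ (rOf s) / s) ^ (n - 1) = B
  simp only [div_pow]
  have hsne : s ≠ 0 := hs.ne'
  field_simp
  ring
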